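/- For the p-norm γ_p(x) = (Σ|x_i|^p)^{1/p} with p ≥ 2, and any x ≠ 0 and z ∈ ℝⁿ, the second directional derivative satisfies D²_{zz} γ_p(x) ≤ (p − 1) γ_p(z)² / γ_p(x) at points x where all coordinates are nonzero. -/

import Mathlib

/-!
Along the line `t ↦ x + t • z` we have `γ_p = S ^ (1/p)` with `S t = ∑ |x i + t * z i| ^ p`.
For `0 ≤ r ≤ 1` the second derivative of `S ^ r` is `r S^(r-1) S'' + r (r-1) S^(r-2) S'^2`,
and the second term is `≤ 0`; moreover `S''(0) = p (p-1) ∑ |x i|^(p-2) z i^2`. Hölder's inequality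
with exponents `p/(p-2)` and `p/2`, taken in its weighted form with weights `|x i|^p` so that
`p = 2` is covered too, bounds this sum by `(∑ |x i|^p)^(1-2/p) γ_p(z)^2`.
-/

open Filter Topology

noncomputable def pNorm {n : ℕ} (p : ℝ) (x : Fin n → ℝ) : ℝ :=
  (∑ i, |x i| ^ p) ^ (1 / p)

theorem hasDerivAt_abs_rpow_mul_self {u : ℝ} (hu : u ≠ 0) (q : ℝ) :
    HasDerivAt (fun v => |v| ^ q * v) ((q + 1) * |u| ^ q) u := by
  have hsign : (SignType.sign u : ℝ) * u = |u| := sign_mul_self u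
  have hpow : |u| ^ (q - 1) * |u| = |u| ^ q := by
    rw [Real.rpow_sub_one (abs_ne_zero.2 hu), div_mul_cancel₀ _ (abs_ne_zero.2 hu)]
  refine (((hasDerivAt_abs hu).rpow_const (Or.inl (abs_ne_zero.2 hu))).fun_mul
    (hasDerivAt_id u)).congr_deriv ?_
  simp only [id]
  linear_combination q * |u| ^ (q - 1) * hsign + q * hpow

theorem deriv_deriv_rpow_le {S S' : ℝ → ℝ} {t₀ S'' r : ℝ} (hr₀ : 0 ≤ r) (hr₁ : r ≤ 1)
    (hS : ∀ᶠ t in 𝓝 t₀, HasDerivAt S (S' t) t) (hS' : HasDerivAt S' S'' t₀)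
    (hpos : 0 < S t₀) :
    deriv (deriv fun t => S t ^ r) t₀ ≤ S'' * r * S t₀ ^ (r - 1) := by
  have hpos_near : ∀ᶠ t in 𝓝 t₀, 0 < S t :=
    hS.self_of_nhds.continuousAt.eventually (lt_mem_nhds hpos)
  have hderiv : deriv (fun t => S t ^ r) =ᶠ[𝓝 t₀] fun t => S' t * r * S t ^ (r - 1) := by
    filter_upwards [hS, hpos_near] with t ht htpos
    exact (ht.rpow_const (Or.inl htpos.ne')).deriv
  have hprod := (hS'.mul_const r).fun_mul
    (hS.self_of_nhds.rpow_const (p := r - 1) (Or.inl hpos.ne'))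
  rw [hderiv.deriv_eq, hprod.deriv]
  have hconcave : S' t₀ * r * (S' t₀ * (r - 1) * S t₀ ^ (r - 1 - 1)) ≤ 0 := by
    rw [show S' t₀ * r * (S' t₀ * (r - 1) * S t₀ ^ (r - 1 - 1))
      = r * (r - 1) * (S' t₀ ^ 2 * S t₀ ^ (r - 1 - 1)) by ring]
    exact mul_nonpos_of_nonpos_of_nonneg (mul_nonpos_of_nonneg_of_nonpos hr₀ (by linarith))
      (mul_nonneg (sq_nonneg _) (Real.rpow_nonneg hpos.le _))
  linarith

section

variable {ι : Type*} [Fintype ι] (x z : ι → ℝ)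

theorem hasDerivAt_sum_abs_rpow_line {p : ℝ} (hp : 1 < p) (t : ℝ) :
    HasDerivAt (fun s => ∑ i, |x i + s * z i| ^ p)
      (p * ∑ i, |x i + t * z i| ^ (p - 2) * (x i + t * z i) * z i) t := by
  rw [Finset.mul_sum]
  refine HasDerivAt.fun_sum fun i _ => ?_
  refine ((hasDerivAt_abs_rpow (x i + t * z i) hp).comp t
    ((hasDerivAt_mul_const (z i)).const_add (x i))).congr_deriv ?_
  ring

theorem hasDerivAt_sum_abs_rpow_mul_line (q : ℝ) {t : ℝ} (hx : ∀ i, x i + t * z i ≠ 0) :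
    HasDerivAt (fun s => ∑ i, |x i + s * z i| ^ q * (x i + s * z i) * z i)
      ((q + 1) * ∑ i, |x i + t * z i| ^ q * z i ^ 2) t := by
  rw [Finset.mul_sum]
  refine HasDerivAt.fun_sum fun i _ => ?_
  refine (((hasDerivAt_abs_rpow_mul_self (hx i) q).comp t
    ((hasDerivAt_mul_const (z i)).const_add (x i))).mul_const (z i)).congr_deriv ?_
  ring

theorem sum_abs_rpow_sub_two_mul_sq_le {p : ℝ} (hp : 2 ≤ p) (hx : ∀ i, x i ≠ 0) :
    ∑ i, |x i| ^ (p - 2) * z i ^ 2 ≤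
      (∑ i, |x i| ^ p) ^ (1 - 2 / p) * (∑ i, |z i| ^ p) ^ (2 / p) := by
  have hx' : ∀ i, 0 < |x i| := fun i => abs_pos.2 (hx i)
  have hweight : ∀ i, |x i| ^ (p - 2) * z i ^ 2 = |x i| ^ p * (|z i| / |x i|) ^ (2 : ℝ) := by
    intro i
    rw [Real.rpow_sub (hx' i)]
    simp only [Real.rpow_two, div_pow, sq_abs]
    field_simp
  have hcancel : ∀ i, |x i| ^ p * ((|z i| / |x i|) ^ (2 : ℝ)) ^ (p / 2) = |z i| ^ p := by
    intro i
    have : 0 < |x i| ^ p := Real.rpow_pos_of_pos (hx' i) p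
    rw [← Real.rpow_mul (by positivity), Real.div_rpow (abs_nonneg _) (hx' i).le]
    field_simp
  have hholder := Real.inner_le_weight_mul_Lp_of_nonneg Finset.univ (p := p / 2) (by linarith)
    (fun i => |x i| ^ p) (fun i => (|z i| / |x i|) ^ (2 : ℝ))
    (fun i => by positivity) (fun i => by positivity)
  simp only [hcancel, inv_div] at hholder
  simpa only [hweight] using hholder

end

theorem pNorm_sq {n : ℕ} (p : ℝ) (x : Fin n → ℝ) :
    pNorm p x ^ 2 = (∑ i, |x i| ^ p) ^ (2 / p) := by
  rw [pNorm, ← Real.rpow_natCast, ← Real.rpow_mul (by positivity)]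
  congr 1
  ring

/-- For `p ≥ 2` and `x` with all coordinates nonzero, the second directional derivative of the
`p`-norm satisfies `D²_{zz} γ_p(x) ≤ (p − 1) γ_p(z)² / γ_p(x)`. -/
theorem second_deriv_pNorm_le {n : ℕ} (p : ℝ) (hp : 2 ≤ p)
    (x z : Fin n → ℝ) (hx : ∀ i, x i ≠ 0) :
    deriv (deriv (fun t : ℝ => pNorm p (x + t • z))) 0 ≤
      (p - 1) * (pNorm p z) ^ 2 / pNorm p x := by
  cases isEmpty_or_nonempty (Fin n) with
  | inl => simp [pNorm, show p ≠ 0 by linarith]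
  | inr =>
  set N := ∑ i, |x i| ^ p
  set Z := ∑ i, |z i| ^ p
  have hN : 0 < N := Finset.sum_pos (fun i _ => by have := hx i; positivity) Finset.univ_nonempty
  have hsecond := deriv_deriv_rpow_le (r := 1 / p) (by positivity) (by bound)
    (Eventually.of_forall (hasDerivAt_sum_abs_rpow_line x z (by linarith)))
    ((hasDerivAt_sum_abs_rpow_mul_line x z (p - 2) (t := 0) (by simpa using hx)).const_mul p)
    (by simpa using hN)
  simp only [zero_mul, add_zero] at hsecond
  calc deriv (deriv (fun t : ℝ => pNorm p (x + t • z))) 0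
      ≤ p * ((p - 2 + 1) * ∑ i, |x i| ^ (p - 2) * z i ^ 2) * (1 / p) * N ^ (1 / p - 1) := hsecond
    _ ≤ p * ((p - 2 + 1) * (N ^ (1 - 2 / p) * Z ^ (2 / p))) * (1 / p) * N ^ (1 / p - 1) := by
      gcongr
      exact sum_abs_rpow_sub_two_mul_sq_le x z hp hx
    _ = (p - 1) * Z ^ (2 / p) / N ^ (1 / p) := by
      have hexp : N ^ (1 - 2 / p) * N ^ (1 / p - 1) = (N ^ (1 / p))⁻¹ := by
        rw [← Real.rpow_add hN, ← Real.rpow_neg hN.le]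
        congr 1
        ring
      have hp_cancel : p * (1 / p) = 1 := mul_one_div_cancel (by linarith)
      rw [div_eq_mul_inv _ (N ^ (1 / p)), ← hexp]
      linear_combination (p - 1) * N ^ (1 - 2 / p) * Z ^ (2 / p) * N ^ (1 / p - 1) * hp_cancel
    _ = (p - 1) * (pNorm p z) ^ 2 / pNorm p x := by rw [pNorm_sq]; rfl
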